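/- arXiv:2111.06789 — 4 statements merged into one kernel-verified Lean document; each statement's English description precedes it below -/
import Mathlib

section
/- Let M be a closed subset of ℝ^N and for each n ∈ ℕ ∪ {∞} let X_n : [0,1] × M → ℝ^N be measurable non-autonomous vector fields such that there are constants R, L ≥ 0 with ‖X_n‖_{L∞} ≤ R, and a full-measure set 𝒯 ⊆ [0,1] such that |X_n(t,p) − X_n(t,q)| ≤ L|p−q| for all p,q ∈ M and all t ∈ 𝒯. For each n let γ_n : [0,1] → M be an integral curve of X_n (i.e. γ_n'(t) = X_n(t, γ_n(t)) a.e.). Suppose γ_n(0) → γ_∞(0) and, for every t ∈ [0,1], ∫₀ᵗ X_n(s, γ_∞(s)) ds → ∫₀ᵗ X_∞(s, γ_∞(s)) ds as n → ∞. Then γ_n → γ_∞ uniformly on [0,1]. -/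
open MeasureTheory Set Filter Topology


lemma integrableOn_comp_aux {N : ℕ} {M : Set (EuclideanSpace ℝ (Fin N))}
    {X : ℝ → EuclideanSpace ℝ (Fin N) → EuclideanSpace ℝ (Fin N)}
    (hXmeas : Measurable ((Set.Icc (0:ℝ) 1 ×ˢ M).restrict
      (fun p : ℝ × EuclideanSpace ℝ (Fin N) => X p.1 p.2)))
    {R : ℝ} (hbnd : ∀ t ∈ Set.Icc (0:ℝ) 1, ∀ p ∈ M, ‖X t p‖ ≤ R)
    {δ : ℝ → EuclideanSpace ℝ (Fin N)} {s : Set ℝ} (hs : MeasurableSet s)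
    (hsub : s ⊆ Set.Icc 0 1) (hδM : ∀ t ∈ s, δ t ∈ M)
    (hδ : Measurable (s.restrict δ)) :
    IntegrableOn (fun t => X t (δ t)) s := by
  have hg : Measurable fun t : s => X (t : ℝ) (δ t) := by
    have hmap : Measurable fun t : s =>
        (⟨((t : ℝ), δ t), ⟨hsub t.2, hδM t t.2⟩⟩ : (Set.Icc (0:ℝ) 1 ×ˢ M)) :=
      Measurable.subtype_mk (measurable_subtype_coe.prodMk hδ)
    exact hXmeas.comp hmap
  have hae : AEMeasurable (fun t => X t (δ t)) (volume.restrict s) := by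
    rw [← map_comap_subtype_coe hs]
    exact (MeasurableEmbedding.subtype_coe hs).aemeasurable_map_iff.mpr hg.aemeasurable
  refine Integrable.mono' (g := fun _ => R) ?_ hae.aestronglyMeasurable ?_
  · refine (integrableOn_const_iff).mpr (Or.inr ?_)
    exact lt_of_le_of_lt (measure_mono hsub) measure_Icc_lt_top
  · exact (ae_restrict_iff' hs).mpr (ae_of_all _ fun t ht => hbnd t (hsub ht) _ (hδM t ht))

lemma curve_reg {N : ℕ} {M : Set (EuclideanSpace ℝ (Fin N))}
    {X : ℝ → EuclideanSpace ℝ (Fin N) → EuclideanSpace ℝ (Fin N)}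
    (hXmeas : Measurable ((Set.Icc (0:ℝ) 1 ×ˢ M).restrict
      (fun p : ℝ × EuclideanSpace ℝ (Fin N) => X p.1 p.2)))
    {R : ℝ} (hbnd : ∀ t ∈ Set.Icc (0:ℝ) 1, ∀ p ∈ M, ‖X t p‖ ≤ R)
    {γ : ℝ → EuclideanSpace ℝ (Fin N)}
    (hγM : ∀ t ∈ Set.Icc (0:ℝ) 1, γ t ∈ M)
    (heq : ∀ t ∈ Set.Icc (0:ℝ) 1, γ t = γ 0 + ∫ s in (0:ℝ)..t, X s (γ s)) :
    IntegrableOn (fun s => X s (γ s)) (Set.Icc 0 1) ∧ ContinuousOn γ (Set.Icc 0 1) := by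
  set f : ℝ → EuclideanSpace ℝ (Fin N) := fun s => X s (γ s) with hf
  have hnull : ∀ x : ℝ, IntegrableOn f {x} := fun x => by
    rw [IntegrableOn, Measure.restrict_eq_zero.mpr (measure_singleton x)]
    exact integrable_zero_measure
  have step1 : ∀ c ∈ Set.Icc (0:ℝ) 1, IntegrableOn f (Set.Icc 0 c) →
      ContinuousOn γ (Set.Icc 0 c) := by
    intro c hc hint
    have hcont : ContinuousOn (fun t => γ 0 + ∫ s in Set.Ioc 0 t, f s) (Set.Icc 0 c) :=
      continuousOn_const.add (intervalIntegral.continuousOn_primitive hint)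
    refine hcont.congr fun t ht => ?_
    rw [heq t ⟨ht.1, ht.2.trans hc.2⟩, intervalIntegral.integral_of_le ht.1]
  set S : Set ℝ := {t | t ∈ Set.Icc (0:ℝ) 1 ∧ IntegrableOn f (Set.Icc 0 t)} with hS
  have hdown : ∀ t ∈ S, ∀ t', 0 ≤ t' → t' ≤ t → t' ∈ S := by
    intro t ht t' h0 h1
    exact ⟨⟨h0, h1.trans ht.1.2⟩, ht.2.mono_set (Set.Icc_subset_Icc_right h1)⟩
  have h0S : (0:ℝ) ∈ S := by
    refine ⟨⟨le_refl _, zero_le_one⟩, ?_⟩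
    rw [Set.Icc_self]; exact hnull 0
  have hne : S.Nonempty := ⟨0, h0S⟩
  have hbdd : BddAbove S := ⟨1, fun t ht => ht.1.2⟩
  set c := sSup S with hc
  have hc0 : 0 ≤ c := le_csSup hbdd h0S
  have hc1 : c ≤ 1 := csSup_le hne fun t ht => ht.1.2
  have hltS : ∀ t, 0 ≤ t → t < c → t ∈ S := by
    intro t h0 hlt
    obtain ⟨t', ht', h⟩ := exists_lt_of_lt_csSup hne hlt
    exact hdown t' ht' t h0 h.le
  -- γ is continuous on Ico 0 c
  have hcont_Ico : ContinuousOn γ (Set.Ico 0 c) := by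
    intro x hx
    have hxc : (x + c)/2 < c := by linarith [hx.2]
    have hxx : x < (x + c)/2 := by linarith [hx.2]
    have hmem : (x + c)/2 ∈ S := hltS _ (by linarith [hx.1]) hxc
    have h1 : ContinuousOn γ (Set.Icc 0 ((x + c)/2)) := step1 _ hmem.1 hmem.2
    have h2 : ContinuousWithinAt γ (Set.Icc 0 ((x + c)/2)) x :=
      h1.continuousWithinAt ⟨hx.1, hxx.le⟩
    refine h2.mono_of_mem_nhdsWithin ?_
    rw [mem_nhdsWithin]
    exact ⟨Set.Iio ((x + c)/2), isOpen_Iio, hxx,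
      fun y hy => ⟨hy.2.1, hy.1.le⟩⟩
  have hIcoInt : IntegrableOn f (Set.Ico 0 c) := by
    refine integrableOn_comp_aux hXmeas hbnd measurableSet_Ico
      (fun t ht => ⟨ht.1, ht.2.le.trans hc1⟩) (fun t ht => hγM t ⟨ht.1, ht.2.le.trans hc1⟩)
      hcont_Ico.restrict.measurable
  have hcS : c ∈ S := by
    refine ⟨⟨hc0, hc1⟩, ?_⟩
    have : Set.Icc (0:ℝ) c = Set.Ico 0 c ∪ {c} := by
      rw [Set.Ico_union_right hc0]
    rw [this]
    exact hIcoInt.union (hnull c)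
  have hc_eq : c = 1 := by
    by_contra hne1
    have hclt : c < 1 := lt_of_le_of_ne hc1 hne1
    have hnotInt : ∀ t, c < t → t ≤ 1 → ¬ IntegrableOn f (Set.Icc 0 t) := by
      intro t h1 h2 hint
      exact absurd (le_csSup hbdd ⟨⟨hc0.trans h1.le, h2⟩, hint⟩) (not_le.mpr h1)
    have hzero : ∀ t ∈ Set.Ioc c 1, γ t = γ 0 := by
      intro t ht
      have hnotII : ¬ IntervalIntegrable f volume 0 t := by
        intro hII
        refine hnotInt t ht.1 ht.2 ?_
        have h0t : (0:ℝ) ≤ t := hc0.trans ht.1.le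
        have := (intervalIntegrable_iff_integrableOn_Icc_of_le h0t).mp hII
        exact this
      rw [heq t ⟨hc0.trans ht.1.le, ht.2⟩, intervalIntegral.integral_undef hnotII, add_zero]
    have hIocInt : IntegrableOn f (Set.Ioc c 1) := by
      have hg : IntegrableOn (fun t => X t (γ 0)) (Set.Ioc c 1) := by
        refine integrableOn_comp_aux hXmeas hbnd measurableSet_Ioc
          (fun t ht => ⟨hc0.trans ht.1.le, ht.2⟩)
          (fun t _ => hγM 0 ⟨le_refl _, zero_le_one⟩) measurable_const
      exact hg.congr_fun (fun t ht => by rw [hf]; simp [hzero t ht]) measurableSet_Ioc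
    have h1S : (1:ℝ) ∈ S := by
      refine ⟨⟨zero_le_one, le_refl _⟩, ?_⟩
      rw [← Set.Icc_union_Ioc_eq_Icc hc0 hc1]
      exact hcS.2.union hIocInt
    exact absurd (le_csSup hbdd h1S) (not_le.mpr hclt)
  rw [hc_eq] at hcS
  exact ⟨hcS.2, step1 1 ⟨zero_le_one, le_refl _⟩ hcS.2⟩

lemma gronwall_aux {A L : ℝ} (hA : 0 ≤ A) (hL : 0 ≤ L) {u : ℝ → ℝ}
    (hu : Continuous u) (hu0 : ∀ t, 0 ≤ u t)
    (hineq : ∀ t ∈ Set.Icc (0:ℝ) 1, u t ≤ A + L * ∫ s in (0:ℝ)..t, u s) :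
    ∀ t ∈ Set.Icc (0:ℝ) 1, u t ≤ A * Real.exp L := by
  set φ : ℝ → ℝ := fun t => A + L * ∫ s in (0:ℝ)..t, u s with hφ
  have hderiv : ∀ t : ℝ, HasDerivAt φ (L * u t) t := by
    intro t
    have h1 : HasDerivAt (fun x => ∫ s in (0:ℝ)..x, u s) (u t) t :=
      intervalIntegral.integral_hasDerivAt_right (hu.intervalIntegrable 0 t)
        (hu.stronglyMeasurableAtFilter volume (𝓝 t)) hu.continuousAt
    exact (h1.const_mul L).const_add A
  have hφcont : Continuous φ := by
    refine continuous_iff_continuousAt.mpr fun t => (hderiv t).continuousAt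
  have hkey : ∀ t ∈ Set.Icc (0:ℝ) 1, ‖φ t‖ ≤ gronwallBound A L 0 (t - 0) := by
    refine norm_le_gronwallBound_of_norm_deriv_right_le hφcont.continuousOn
      (fun t _ => (hderiv t).hasDerivWithinAt) ?_ ?_
    · simp only [hφ, Real.norm_eq_abs, intervalIntegral.integral_same, mul_zero, add_zero]
      exact le_of_eq (abs_of_nonneg hA)
    · intro t ht
      have htI : t ∈ Set.Icc (0:ℝ) 1 := ⟨ht.1, ht.2.le⟩
      have huφ : u t ≤ φ t := hineq t htI
      have hφ0 : 0 ≤ φ t := (hu0 t).trans huφ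
      rw [Real.norm_eq_abs, Real.norm_eq_abs, abs_of_nonneg (mul_nonneg hL (hu0 t)),
        abs_of_nonneg hφ0, add_zero]
      exact mul_le_mul_of_nonneg_left huφ hL
  intro t ht
  have := hkey t ht
  rw [gronwallBound_ε0, sub_zero] at this
  have h2 : u t ≤ φ t := hineq t ht
  have h3 : ‖φ t‖ = φ t := abs_of_nonneg ((hu0 t).trans h2)
  calc u t ≤ φ t := h2
    _ ≤ A * Real.exp (L * t) := h3 ▸ this
    _ ≤ A * Real.exp L := by
        refine mul_le_mul_of_nonneg_left (Real.exp_le_exp.mpr ?_) hA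
        nlinarith [ht.2, hL]

/-- Convergence of integral curves of non-autonomous vector fields that are
uniformly bounded, uniformly Lipschitz in the space variable, and whose time integrals along
the limit curve converge. Integral curves are encoded via the integral (Carathéodory) form
of the Cauchy problem. -/
theorem stmt_0 {N : ℕ} (M : Set (EuclideanSpace ℝ (Fin N))) (hM : IsClosed M)
    (X : ℕ → ℝ → EuclideanSpace ℝ (Fin N) → EuclideanSpace ℝ (Fin N))
    (Xinf : ℝ → EuclideanSpace ℝ (Fin N) → EuclideanSpace ℝ (Fin N))
    (hXmeas : ∀ n, Measurable ((Set.Icc (0:ℝ) 1 ×ˢ M).restrict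
      (fun p : ℝ × EuclideanSpace ℝ (Fin N) => X n p.1 p.2)))
    (hXinfmeas : Measurable ((Set.Icc (0:ℝ) 1 ×ˢ M).restrict
      (fun p : ℝ × EuclideanSpace ℝ (Fin N) => Xinf p.1 p.2)))
    (R L : ℝ) (hR : 0 ≤ R) (hL : 0 ≤ L)
    (hbnd : ∀ n, ∀ t ∈ Set.Icc (0:ℝ) 1, ∀ p ∈ M, ‖X n t p‖ ≤ R)
    (hbndinf : ∀ t ∈ Set.Icc (0:ℝ) 1, ∀ p ∈ M, ‖Xinf t p‖ ≤ R)
    (𝒯 : Set ℝ) (h𝒯 : 𝒯 ⊆ Set.Icc 0 1) (h𝒯full : volume (Set.Icc (0:ℝ) 1 \ 𝒯) = 0)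
    (hlip : ∀ n, ∀ t ∈ 𝒯, ∀ p ∈ M, ∀ q ∈ M, ‖X n t p - X n t q‖ ≤ L * ‖p - q‖)
    (hlipinf : ∀ t ∈ 𝒯, ∀ p ∈ M, ∀ q ∈ M, ‖Xinf t p - Xinf t q‖ ≤ L * ‖p - q‖)
    (γ : ℕ → ℝ → EuclideanSpace ℝ (Fin N)) (γinf : ℝ → EuclideanSpace ℝ (Fin N))
    (hγM : ∀ n, ∀ t ∈ Set.Icc (0:ℝ) 1, γ n t ∈ M)
    (hγinfM : ∀ t ∈ Set.Icc (0:ℝ) 1, γinf t ∈ M)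
    (hγint : ∀ n, ∀ t ∈ Set.Icc (0:ℝ) 1,
      γ n t = γ n 0 + ∫ s in (0:ℝ)..t, X n s (γ n s))
    (hγinfint : ∀ t ∈ Set.Icc (0:ℝ) 1,
      γinf t = γinf 0 + ∫ s in (0:ℝ)..t, Xinf s (γinf s))
    (hinit : Tendsto (fun n => γ n 0) atTop (𝓝 (γinf 0)))
    (hconv : ∀ t ∈ Set.Icc (0:ℝ) 1,
      Tendsto (fun n => ∫ s in (0:ℝ)..t, X n s (γinf s)) atTop
        (𝓝 (∫ s in (0:ℝ)..t, Xinf s (γinf s)))) :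
    TendstoUniformlyOn (fun n t => γ n t) γinf atTop (Set.Icc 0 1) := by
  classical
  have h0I : (0:ℝ) ∈ Set.Icc (0:ℝ) 1 := ⟨le_refl _, zero_le_one⟩
  have hreg : ∀ n, IntegrableOn (fun s => X n s (γ n s)) (Set.Icc 0 1) ∧
      ContinuousOn (γ n) (Set.Icc 0 1) :=
    fun n => curve_reg (hXmeas n) (hbnd n) (hγM n) (hγint n)
  obtain ⟨hfinfInt, hγinfcont⟩ := curve_reg hXinfmeas hbndinf hγinfM hγinfint
  have hXninfInt : ∀ n, IntegrableOn (fun s => X n s (γinf s)) (Set.Icc 0 1) := fun n =>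
    integrableOn_comp_aux (hXmeas n) (hbnd n) measurableSet_Icc (subset_refl _) hγinfM
      hγinfcont.restrict.measurable
  have hsub2 : ∀ a b : ℝ, a ∈ Set.Icc (0:ℝ) 1 → b ∈ Set.Icc (0:ℝ) 1 →
      Set.uIoc a b ⊆ Set.Icc 0 1 := fun a b ha hb =>
    Set.Ioc_subset_Icc_self.trans (Set.uIcc_subset_Icc ha hb)
  have toII : ∀ (g : ℝ → EuclideanSpace ℝ (Fin N)), IntegrableOn g (Set.Icc 0 1) →
      ∀ a b : ℝ, a ∈ Set.Icc (0:ℝ) 1 → b ∈ Set.Icc (0:ℝ) 1 →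
      IntervalIntegrable g volume a b := by
    intro g hg a b ha hb
    rw [intervalIntegrable_iff]
    exact hg.mono_set (hsub2 a b ha hb)
  set bfun : ℕ → ℝ → ℝ := fun n t =>
    ‖(∫ s in (0:ℝ)..t, X n s (γinf s)) - ∫ s in (0:ℝ)..t, Xinf s (γinf s)‖ with hbfun
  have hbstep : ∀ n, ∀ t₀ ∈ Set.Icc (0:ℝ) 1, ∀ t ∈ Set.Icc (0:ℝ) 1,
      bfun n t ≤ bfun n t₀ + 2 * R * |t - t₀| := by
    intro n t₀ ht₀ t ht
    have h1 : (∫ s in (0:ℝ)..t, X n s (γinf s)) - (∫ s in (0:ℝ)..t₀, X n s (γinf s))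
        = ∫ s in t₀..t, X n s (γinf s) :=
      intervalIntegral.integral_interval_sub_left (toII _ (hXninfInt n) 0 t h0I ht)
        (toII _ (hXninfInt n) 0 t₀ h0I ht₀)
    have h2 : (∫ s in (0:ℝ)..t, Xinf s (γinf s)) - (∫ s in (0:ℝ)..t₀, Xinf s (γinf s))
        = ∫ s in t₀..t, Xinf s (γinf s) :=
      intervalIntegral.integral_interval_sub_left (toII _ hfinfInt 0 t h0I ht)
        (toII _ hfinfInt 0 t₀ h0I ht₀)
    have hkey : (∫ s in (0:ℝ)..t, X n s (γinf s)) - (∫ s in (0:ℝ)..t, Xinf s (γinf s))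
        = ((∫ s in (0:ℝ)..t₀, X n s (γinf s)) - (∫ s in (0:ℝ)..t₀, Xinf s (γinf s)))
          + ((∫ s in t₀..t, X n s (γinf s)) - (∫ s in t₀..t, Xinf s (γinf s))) := by
      rw [← h1, ← h2]; abel
    have hb1 : ‖∫ s in t₀..t, X n s (γinf s)‖ ≤ R * |t - t₀| :=
      intervalIntegral.norm_integral_le_of_norm_le_const fun x hx =>
        hbnd n x (hsub2 t₀ t ht₀ ht hx) _ (hγinfM x (hsub2 t₀ t ht₀ ht hx))
    have hb2 : ‖∫ s in t₀..t, Xinf s (γinf s)‖ ≤ R * |t - t₀| :=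
      intervalIntegral.norm_integral_le_of_norm_le_const fun x hx =>
        hbndinf x (hsub2 t₀ t ht₀ ht hx) _ (hγinfM x (hsub2 t₀ t ht₀ ht hx))
    calc bfun n t = ‖((∫ s in (0:ℝ)..t₀, X n s (γinf s)) - (∫ s in (0:ℝ)..t₀, Xinf s (γinf s)))
          + ((∫ s in t₀..t, X n s (γinf s)) - (∫ s in t₀..t, Xinf s (γinf s)))‖ := by
          simp only [hbfun]; rw [hkey]
      _ ≤ bfun n t₀ + ‖(∫ s in t₀..t, X n s (γinf s)) - (∫ s in t₀..t, Xinf s (γinf s))‖ :=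
          norm_add_le _ _
      _ ≤ bfun n t₀ + (‖∫ s in t₀..t, X n s (γinf s)‖ + ‖∫ s in t₀..t, Xinf s (γinf s)‖) :=
          add_le_add le_rfl (norm_sub_le _ _)
      _ ≤ bfun n t₀ + (R * |t - t₀| + R * |t - t₀|) :=
          add_le_add le_rfl (add_le_add hb1 hb2)
      _ = bfun n t₀ + 2 * R * |t - t₀| := by ring
  rw [Metric.tendstoUniformlyOn_iff]
  intro ε hε
  have hexpL : (0:ℝ) < Real.exp L := Real.exp_pos L
  have hden : (0:ℝ) < 2 * Real.exp L + 1 := by positivity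
  set ε' : ℝ := ε / (2 * Real.exp L + 1) with hε'def
  have hε'pos : 0 < ε' := div_pos hε hden
  obtain ⟨m, hmpos, hm2⟩ : ∃ m : ℕ, (0:ℝ) < (m:ℝ) ∧ 2 * R / (m:ℝ) < ε' / 2 := by
    obtain ⟨m', hm'⟩ := exists_nat_gt (2 * R / (ε' / 2))
    refine ⟨m' + 1, by exact_mod_cast Nat.succ_pos m', ?_⟩
    have hmpos : (0:ℝ) < ((m' + 1 : ℕ):ℝ) := by exact_mod_cast Nat.succ_pos m'
    have hlt : 2 * R / (ε' / 2) < ((m' + 1 : ℕ):ℝ) :=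
      lt_of_lt_of_le hm' (by exact_mod_cast Nat.le_succ m')
    have h1 : 2 * R < ((m' + 1 : ℕ):ℝ) * (ε' / 2) := by
      have := (div_lt_iff₀ (by positivity : (0:ℝ) < ε' / 2)).mp hlt
      linarith
    rw [div_lt_iff₀ hmpos]
    linarith
  have hgrid : ∀ i : ℕ, i ≤ m → Tendsto (fun n => bfun n ((i:ℝ)/(m:ℝ))) atTop (𝓝 0) := by
    intro i hi
    have hmemI : (i:ℝ)/(m:ℝ) ∈ Set.Icc (0:ℝ) 1 :=
      ⟨by positivity, by rw [div_le_one hmpos]; exact_mod_cast hi⟩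
    have h1 := (hconv _ hmemI).sub
      (tendsto_const_nhds (x := ∫ s in (0:ℝ)..((i:ℝ)/(m:ℝ)), Xinf s (γinf s)))
    rw [sub_self] at h1
    simpa [hbfun] using h1.norm
  have hB : ∀ᶠ n in atTop, ∀ i ∈ Finset.range (m+1), bfun n ((i:ℝ)/(m:ℝ)) < ε' / 2 := by
    rw [eventually_all_finset]
    intro i hi
    exact (hgrid i (Nat.lt_succ_iff.mp (Finset.mem_range.mp hi))).eventually
      (gt_mem_nhds (by positivity))
  have hA : ∀ᶠ n in atTop, ‖γ n 0 - γinf 0‖ < ε' := by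
    have h1 : Tendsto (fun n => ‖γ n 0 - γinf 0‖) atTop (𝓝 0) :=
      tendsto_iff_norm_sub_tendsto_zero.mp hinit
    exact h1.eventually (gt_mem_nhds hε'pos)
  filter_upwards [hA, hB] with n han hbn
  have hbsmall : ∀ t ∈ Set.Icc (0:ℝ) 1, bfun n t < ε' := by
    intro t ht
    set i : ℕ := ⌊t * (m:ℝ)⌋₊ with hi
    have htm0 : 0 ≤ t * (m:ℝ) := mul_nonneg ht.1 hmpos.le
    have him : i ≤ m := by
      have h1 : t * (m:ℝ) ≤ (m:ℝ) := by nlinarith [ht.2]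
      calc i ≤ ⌊(m:ℝ)⌋₊ := Nat.floor_mono h1
        _ = m := Nat.floor_natCast m
    have hile : (i:ℝ)/(m:ℝ) ≤ t := by
      rw [div_le_iff₀ hmpos]
      exact Nat.floor_le htm0
    have hlt1 : t - (i:ℝ)/(m:ℝ) ≤ 1/(m:ℝ) := by
      have h5 : t * (m:ℝ) < (i:ℝ) + 1 := by
        rw [hi]; exact_mod_cast Nat.lt_floor_add_one (t * (m:ℝ))
      have h3 : t ≤ ((i:ℝ)+1)/(m:ℝ) := by
        rw [le_div_iff₀ hmpos]
        linarith
      have h4 : ((i:ℝ)+1)/(m:ℝ) - (i:ℝ)/(m:ℝ) = 1/(m:ℝ) := by ring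
      linarith
    have hmem : (i:ℝ)/(m:ℝ) ∈ Set.Icc (0:ℝ) 1 :=
      ⟨by positivity, by rw [div_le_one hmpos]; exact_mod_cast him⟩
    have hstep := hbstep n ((i:ℝ)/(m:ℝ)) hmem t ht
    have habs : |t - (i:ℝ)/(m:ℝ)| = t - (i:ℝ)/(m:ℝ) := abs_of_nonneg (by linarith)
    have hRb : 2 * R * |t - (i:ℝ)/(m:ℝ)| ≤ 2 * R / (m:ℝ) := by
      rw [habs]
      calc 2 * R * (t - (i:ℝ)/(m:ℝ)) ≤ 2 * R * (1/(m:ℝ)) := by nlinarith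
        _ = 2 * R / (m:ℝ) := by ring
    have hgridn : bfun n ((i:ℝ)/(m:ℝ)) < ε' / 2 :=
      hbn i (Finset.mem_range.mpr (Nat.lt_succ_of_le him))
    calc bfun n t ≤ bfun n ((i:ℝ)/(m:ℝ)) + 2 * R * |t - (i:ℝ)/(m:ℝ)| := hstep
      _ < ε' / 2 + ε' / 2 := by
          refine add_lt_add_of_lt_of_le hgridn (hRb.trans hm2.le)
      _ = ε' := by ring
  set a : ℝ := ‖γ n 0 - γinf 0‖ with ha
  set A : ℝ := a + ε' with hA'
  have hineq : ∀ t ∈ Set.Icc (0:ℝ) 1,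
      ‖γ n t - γinf t‖ ≤ A + L * ∫ s in (0:ℝ)..t, ‖γ n s - γinf s‖ := by
    intro t ht
    have hIn : IntervalIntegrable (fun s => X n s (γ n s)) volume 0 t :=
      toII _ (hreg n).1 0 t h0I ht
    have hInγ : IntervalIntegrable (fun s => X n s (γinf s)) volume 0 t :=
      toII _ (hXninfInt n) 0 t h0I ht
    have hsplit : γ n t - γinf t = (γ n 0 - γinf 0)
        + (∫ s in (0:ℝ)..t, (X n s (γ n s) - X n s (γinf s)))
        + ((∫ s in (0:ℝ)..t, X n s (γinf s)) - ∫ s in (0:ℝ)..t, Xinf s (γinf s)) := by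
      rw [hγint n t ht, hγinfint t ht, intervalIntegral.integral_sub hIn hInγ]
      abel
    have hmid : ‖∫ s in (0:ℝ)..t, (X n s (γ n s) - X n s (γinf s))‖
        ≤ L * ∫ s in (0:ℝ)..t, ‖γ n s - γinf s‖ := by
      have hnormint : IntervalIntegrable (fun s => ‖X n s (γ n s) - X n s (γinf s)‖)
          volume 0 t := (hIn.sub hInγ).norm
      have hucont : ContinuousOn (fun s => ‖γ n s - γinf s‖) (Set.Icc 0 1) :=
        ((hreg n).2.sub hγinfcont).norm
      have huI : IntervalIntegrable (fun s => ‖γ n s - γinf s‖) volume 0 t :=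
        (hucont.mono (Set.uIcc_subset_Icc h0I ht)).intervalIntegrable
      have huIL : IntervalIntegrable (fun s => L * ‖γ n s - γinf s‖) volume 0 t :=
        huI.const_mul L
      have hTae : ∀ᵐ s ∂(volume : Measure ℝ), s ∈ Set.Icc (0:ℝ) 1 → s ∈ 𝒯 := by
        rw [ae_iff]
        refine measure_mono_null ?_ h𝒯full
        intro s hs
        rw [Set.mem_setOf_eq] at hs
        push_neg at hs
        exact ⟨hs.1, hs.2⟩
      have hT : (fun s => ‖X n s (γ n s) - X n s (γinf s)‖)
          ≤ᵐ[volume.restrict (Set.Icc (0:ℝ) t)] (fun s => L * ‖γ n s - γinf s‖) := by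
        refine (ae_restrict_iff' measurableSet_Icc).mpr ?_
        refine hTae.mono ?_
        intro s hs hst
        have hsI : s ∈ Set.Icc (0:ℝ) 1 := ⟨hst.1, hst.2.trans ht.2⟩
        exact hlip n s (hs hsI) _ (hγM n s hsI) _ (hγinfM s hsI)
      calc ‖∫ s in (0:ℝ)..t, (X n s (γ n s) - X n s (γinf s))‖
          ≤ ∫ s in (0:ℝ)..t, ‖X n s (γ n s) - X n s (γinf s)‖ :=
            intervalIntegral.norm_integral_le_integral_norm ht.1
        _ ≤ ∫ s in (0:ℝ)..t, L * ‖γ n s - γinf s‖ :=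
            intervalIntegral.integral_mono_ae_restrict ht.1 hnormint huIL hT
        _ = L * ∫ s in (0:ℝ)..t, ‖γ n s - γinf s‖ :=
            intervalIntegral.integral_const_mul L _
    calc ‖γ n t - γinf t‖
        ≤ ‖γ n 0 - γinf 0‖ + ‖∫ s in (0:ℝ)..t, (X n s (γ n s) - X n s (γinf s))‖
          + bfun n t := by rw [hsplit]; exact norm_add₃_le
      _ ≤ a + (L * ∫ s in (0:ℝ)..t, ‖γ n s - γinf s‖) + ε' :=
          add_le_add (add_le_add le_rfl hmid) (hbsmall t ht).le
      _ = A + L * ∫ s in (0:ℝ)..t, ‖γ n s - γinf s‖ := by rw [hA']; ring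
  set pr : ℝ → ℝ := fun s => max 0 (min 1 s) with hpr
  have hprmem : ∀ s, pr s ∈ Set.Icc (0:ℝ) 1 := fun s =>
    ⟨le_max_left _ _, max_le zero_le_one (min_le_left _ _)⟩
  have hprid : ∀ s ∈ Set.Icc (0:ℝ) 1, pr s = s := fun s hs => by
    rw [hpr]; simp only; rw [min_eq_right hs.2, max_eq_right hs.1]
  have hprcont : Continuous pr := continuous_const.max (continuous_const.min continuous_id)
  set u : ℝ → ℝ := fun s => ‖γ n (pr s) - γinf (pr s)‖ with hu
  have hucont : Continuous u := by
    have h1 : Continuous (fun s => γ n (pr s)) := (hreg n).2.comp_continuous hprcont hprmem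
    have h2 : Continuous (fun s => γinf (pr s)) := hγinfcont.comp_continuous hprcont hprmem
    exact (h1.sub h2).norm
  have huineq : ∀ t ∈ Set.Icc (0:ℝ) 1, u t ≤ A + L * ∫ s in (0:ℝ)..t, u s := by
    intro t ht
    have hcongr : (∫ s in (0:ℝ)..t, u s) = ∫ s in (0:ℝ)..t, ‖γ n s - γinf s‖ := by
      refine intervalIntegral.integral_congr fun s hs => ?_
      have hsI : s ∈ Set.Icc (0:ℝ) 1 := Set.uIcc_subset_Icc h0I ht hs
      rw [hu]; simp only; rw [hprid s hsI]
    have hut : u t = ‖γ n t - γinf t‖ := by rw [hu]; simp only; rw [hprid t ht]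
    rw [hcongr, hut]
    exact hineq t ht
  have hAnn : 0 ≤ A := add_nonneg (norm_nonneg _) hε'pos.le
  have hgron := gronwall_aux hAnn hL hucont (fun t => norm_nonneg _) huineq
  intro t ht
  have hut : u t = ‖γ n t - γinf t‖ := by rw [hu]; simp only; rw [hprid t ht]
  have hfin : ‖γ n t - γinf t‖ < ε := by
    have h1 : ‖γ n t - γinf t‖ ≤ A * Real.exp L := hut ▸ hgron t ht
    have h2 : A < 2 * ε' := by rw [hA']; linarith
    have h3 : A * Real.exp L < (2 * ε') * Real.exp L :=
      mul_lt_mul_of_pos_right h2 hexpL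
    have h4 : (2 * ε') * Real.exp L < ε' * (2 * Real.exp L + 1) := by nlinarith
    have h5 : ε' * (2 * Real.exp L + 1) = ε := by
      rw [hε'def]; field_simp
    linarith
  rw [dist_eq_norm, ← norm_neg]
  simpa using hfin
end

section
/- Let 𝔼 be a finite-dimensional Banach space and N : [0,1] × 𝔼 → [0,∞) a continuous function such that N_t := N(t,·) is a norm on 𝔼 for each t ∈ [0,1]. Define ‖u‖_{N,1} := ∫₀¹ N_t(u(t)) dt on L¹([0,1]; 𝔼) and ‖w‖_{N*,∞} := ess sup_t N_t*(w(t)) on L^∞([0,1]; 𝔼*), where N_t* is the dual norm of N_t. Then the dual norm of ‖·‖_{N,1} on L^∞([0,1]; 𝔼*) equals ‖·‖_{N*,∞}. -/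
/-!
Homogeneity of `N_t` gives `w(t) v ≤ N_t*(w(t)) · N_t(v)`, and integrating yields
`∫ w(u) ≤ ‖w‖_{N*,∞} · ‖u‖_{N,1}`. Conversely, if `c < ‖w‖_{N*,∞}`, then on a set of positive
measure some term `v` of a fixed dense sequence has `N_t(v) ≤ 1` and `w(t) v > c`. For a piece `A`
of that set of finite positive measure, `u = 1_A v / |A|` turns both `‖u‖_{N,1}` and `∫ w(u)` into
averages over `A`, so `‖u‖_{N,1} ≤ 1` and `∫ w(u) ≥ c`. Compactness of `[0,1] × sphere` makes the
`N_t` uniformly equivalent to `‖·‖`, which gives the integrability and essential boundedness needed.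
-/

open MeasureTheory Set Filter Topology
open scoped ENNReal

section DualNormDuality

variable {α E : Type*} [MeasurableSpace α] {μ : Measure α} [NormedAddCommGroup E]

lemma aestronglyMeasurable_apply_of_continuous_of_measurable {X : Type*} [TopologicalSpace X]
    [TopologicalSpace.MetrizableSpace X] [SecondCountableTopology X] {F : α → X → ℝ}
    (hFc : ∀ t, Continuous (F t)) (hFm : ∀ x, Measurable fun t ↦ F t x) {u : α → X}
    (hu : AEStronglyMeasurable u μ) : AEStronglyMeasurable (fun t ↦ F t (u t)) μ := by
  borelize X
  exact ((measurable_uncurry_of_continuous_of_measurable hFc hFm).comp_aemeasurable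
    (hu.aemeasurable.prodMk aemeasurable_id)).aestronglyMeasurable

lemma integrable_apply_of_norm_le [SecondCountableTopology E] {N : α → E → ℝ} {C : ℝ}
    (hNc : ∀ t, Continuous (N t)) (hNm : ∀ v, Measurable fun t ↦ N t v)
    (hN : ∀ t v, ‖N t v‖ ≤ C * ‖v‖) {u : α → E} (hu : Integrable u μ) :
    Integrable (fun t ↦ N t (u t)) μ :=
  (hu.norm.const_mul C).mono'
    (aestronglyMeasurable_apply_of_continuous_of_measurable hNc hNm hu.1)
    (ae_of_all _ fun t ↦ hN t (u t))

variable [NormedSpace ℝ E]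

noncomputable def dualNorm (n : E → ℝ) (f : E →L[ℝ] ℝ) : ℝ :=
  sSup {r | ∃ v, n v ≤ 1 ∧ r = f v}

section Homogeneous

variable {n : E → ℝ} {f : E →L[ℝ] ℝ} {c₀ c C : ℝ}

lemma apply_zero_of_abs_smul (hsmul : ∀ (a : ℝ) v, n (a • v) = |a| * n v) : n 0 = 0 := by
  simpa using hsmul 0 0

lemma apply_le_div_of_le_one (hc₀ : 0 < c₀) (hlow : ∀ v, c₀ * ‖v‖ ≤ n v) {v : E}
    (hv : n v ≤ 1) : f v ≤ ‖f‖ / c₀ := by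
  rw [le_div_iff₀ hc₀]
  calc f v * c₀ ≤ ‖f‖ * ‖v‖ * c₀ := by gcongr; exact (le_abs_self _).trans (f.le_opNorm v)
    _ = ‖f‖ * (c₀ * ‖v‖) := by ring
    _ ≤ ‖f‖ * 1 := by gcongr; exact (hlow v).trans hv
    _ = ‖f‖ := mul_one _

lemma bddAbove_dualNorm_set (hc₀ : 0 < c₀) (hlow : ∀ v, c₀ * ‖v‖ ≤ n v) :
    BddAbove {r | ∃ v, n v ≤ 1 ∧ r = f v} :=
  ⟨‖f‖ / c₀, by rintro _ ⟨v, hv, rfl⟩; exact apply_le_div_of_le_one hc₀ hlow hv⟩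

lemma zero_mem_dualNorm_set (hsmul : ∀ (a : ℝ) v, n (a • v) = |a| * n v) :
    (0 : ℝ) ∈ {r | ∃ v, n v ≤ 1 ∧ r = f v} :=
  ⟨0, by simp [apply_zero_of_abs_smul hsmul], by simp⟩

lemma dualNorm_nonneg (hsmul : ∀ (a : ℝ) v, n (a • v) = |a| * n v) (hc₀ : 0 < c₀)
    (hlow : ∀ v, c₀ * ‖v‖ ≤ n v) : 0 ≤ dualNorm n f :=
  le_csSup (bddAbove_dualNorm_set hc₀ hlow) (zero_mem_dualNorm_set hsmul)

lemma dualNorm_le_div (hsmul : ∀ (a : ℝ) v, n (a • v) = |a| * n v) (hc₀ : 0 < c₀)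
    (hlow : ∀ v, c₀ * ‖v‖ ≤ n v) : dualNorm n f ≤ ‖f‖ / c₀ :=
  csSup_le ⟨0, zero_mem_dualNorm_set hsmul⟩ fun _ ⟨_, hv, hr⟩ ↦
    hr ▸ apply_le_div_of_le_one hc₀ hlow hv

lemma apply_le_dualNorm_mul (hsmul : ∀ (a : ℝ) v, n (a • v) = |a| * n v) (hc₀ : 0 < c₀)
    (hlow : ∀ v, c₀ * ‖v‖ ≤ n v) (v : E) : f v ≤ dualNorm n f * n v := by
  rcases eq_or_ne v 0 with rfl | hv
  · simp [apply_zero_of_abs_smul hsmul]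
  have hpos : 0 < n v := (mul_pos hc₀ (norm_pos_iff.2 hv)).trans_le (hlow v)
  have hmem : f ((n v)⁻¹ • v) ∈ {r | ∃ v, n v ≤ 1 ∧ r = f v} :=
    ⟨_, by rw [hsmul, abs_of_pos (inv_pos.2 hpos), inv_mul_cancel₀ hpos.ne'], rfl⟩
  calc f v = n v * f ((n v)⁻¹ • v) := by
        rw [map_smul, smul_eq_mul, mul_inv_cancel_left₀ hpos.ne']
    _ ≤ n v * dualNorm n f := by
        gcongr
        exact le_csSup (bddAbove_dualNorm_set hc₀ hlow) hmem
    _ = dualNorm n f * n v := mul_comm _ _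

lemma DenseRange.exists_lt_apply_of_lt_dualNorm (hn : Continuous n)
    (hsmul : ∀ (a : ℝ) v, n (a • v) = |a| * n v) {d : ℕ → E} (hd : DenseRange d)
    (hc : c < dualNorm n f) : ∃ k, n (d k) < 1 ∧ c < f (d k) := by
  obtain ⟨_, ⟨v, hv, rfl⟩, hcv⟩ := exists_lt_of_lt_csSup ⟨0, zero_mem_dualNorm_set hsmul⟩ hc
  have hopen : IsOpen {x | n x < 1 ∧ c < f x} :=
    (isOpen_lt hn continuous_const).inter (isOpen_lt continuous_const f.continuous)
  -- shrinking `v` slightly makes `n` strictly less than `1` while keeping `c < f`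
  have hne : {x | n x < 1 ∧ c < f x}.Nonempty := by
    have hlim : Tendsto (fun s : ℝ ↦ s * f v) (𝓝[<] 1) (𝓝 (f v)) := by
      simpa using (tendsto_id.mono_left (nhdsWithin_le_nhds (a := (1 : ℝ)))).mul_const (f v)
    obtain ⟨s, hcs, hs⟩ :=
      ((hlim.eventually (lt_mem_nhds hcv)).and (Ioo_mem_nhdsLT zero_lt_one)).exists
    refine ⟨s • v, ?_, by rwa [map_smul, smul_eq_mul]⟩
    show n (s • v) < 1
    rw [hsmul, abs_of_pos hs.1]
    nlinarith [hs.2]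
  exact hd.exists_mem_open hopen hne

lemma apply_eq_norm_mul_apply_inv_norm_smul (hsmul : ∀ (a : ℝ) v, n (a • v) = |a| * n v)
    {v : E} (hv : v ≠ 0) : n v = ‖v‖ * n (‖v‖⁻¹ • v) := by
  rw [hsmul, abs_inv, abs_norm, mul_inv_cancel_left₀ (norm_ne_zero_iff.2 hv)]

lemma mul_norm_le_of_forall_mem_sphere (hsmul : ∀ (a : ℝ) v, n (a • v) = |a| * n v)
    (h : ∀ v ∈ Metric.sphere (0 : E) 1, c ≤ n v) (v : E) : c * ‖v‖ ≤ n v := by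
  rcases eq_or_ne v 0 with rfl | hv
  · simp [apply_zero_of_abs_smul hsmul]
  rw [apply_eq_norm_mul_apply_inv_norm_smul hsmul hv, mul_comm]
  gcongr
  exact h _ (mem_sphere_zero_iff_norm.2 (norm_smul_inv_norm hv))

lemma le_mul_norm_of_forall_mem_sphere (hsmul : ∀ (a : ℝ) v, n (a • v) = |a| * n v)
    (h : ∀ v ∈ Metric.sphere (0 : E) 1, n v ≤ C) (v : E) : n v ≤ C * ‖v‖ := by
  rcases eq_or_ne v 0 with rfl | hv
  · simp [apply_zero_of_abs_smul hsmul]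
  rw [apply_eq_norm_mul_apply_inv_norm_smul hsmul hv, mul_comm]
  gcongr
  exact h _ (mem_sphere_zero_iff_norm.2 (norm_smul_inv_norm hv))

variable [ProperSpace E] {T : Type*} [TopologicalSpace T] {K : Set T} {N : T → E → ℝ}

theorem IsCompact.exists_pos_mul_norm_le (hK : IsCompact K)
    (hNc : ContinuousOn (Function.uncurry N) (K ×ˢ univ))
    (hsmul : ∀ t ∈ K, ∀ (a : ℝ) v, N t (a • v) = |a| * N t v)
    (hpos : ∀ t ∈ K, ∀ v, v ≠ 0 → 0 < N t v) :
    ∃ c₀ > 0, ∀ t ∈ K, ∀ v, c₀ * ‖v‖ ≤ N t v := by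
  obtain ⟨c₀, hc₀, h⟩ := (hK.prod (isCompact_sphere (0 : E) 1)).exists_forall_le'
    (hNc.mono (prod_mono subset_rfl (subset_univ _))) fun p hp ↦
      hpos p.1 hp.1 p.2 (ne_zero_of_mem_sphere one_ne_zero ⟨p.2, hp.2⟩)
  exact ⟨c₀, hc₀, fun t ht ↦
    mul_norm_le_of_forall_mem_sphere (hsmul t ht) fun v hv ↦ h (t, v) ⟨ht, hv⟩⟩

theorem IsCompact.exists_le_mul_norm (hK : IsCompact K)
    (hNc : ContinuousOn (Function.uncurry N) (K ×ˢ univ))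
    (hsmul : ∀ t ∈ K, ∀ (a : ℝ) v, N t (a • v) = |a| * N t v) :
    ∃ C, ∀ t ∈ K, ∀ v, N t v ≤ C * ‖v‖ := by
  obtain ⟨C, hC⟩ := (hK.prod (isCompact_sphere (0 : E) 1)).exists_bound_of_continuousOn
    (hNc.mono (prod_mono subset_rfl (subset_univ _)))
  exact ⟨C, fun t ht ↦ le_mul_norm_of_forall_mem_sphere (hsmul t ht) fun v hv ↦
    (le_abs_self _).trans (hC (t, v) ⟨ht, hv⟩)⟩

end Homogeneous

section Family

variable {N : α → E → ℝ} {w : α → E →L[ℝ] ℝ} {u : α → E} {c₀ c C : ℝ}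

lemma integrable_clm_apply_of_memLp_top (hw : MemLp w ∞ μ) (hu : Integrable u μ) :
    Integrable (fun t ↦ w t (u t)) μ :=
  memLp_one_iff_integrable.1 <| hw.of_bilin (fun L x ↦ L x) 1 (memLp_one_iff_integrable.2 hu)
    (isBoundedBilinearMap_apply.continuous.comp_aestronglyMeasurable (hw.1.prodMk hu.1))
    (ae_of_all _ fun t ↦ by simpa using (w t).le_opNNNorm (u t))

lemma exists_ae_norm_le_of_memLp_top (hw : MemLp w ∞ μ) : ∃ R, ∀ᵐ t ∂μ, ‖w t‖ ≤ R := by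
  have hfin := hw.2
  rw [eLpNorm_exponent_top] at hfin
  obtain ⟨R, hR⟩ := eLpNormEssSup_lt_top_iff_isBoundedUnder.1 hfin
  exact ⟨R, hR.mono fun t ht ↦ ht⟩

lemma isBoundedUnder_dualNorm (hsmul : ∀ t (a : ℝ) v, N t (a • v) = |a| * N t v)
    (hc₀ : 0 < c₀) (hlow : ∀ t v, c₀ * ‖v‖ ≤ N t v) (hw : MemLp w ∞ μ) :
    IsBoundedUnder (· ≤ ·) (ae μ) fun t ↦ dualNorm (N t) (w t) := by
  obtain ⟨R, hR⟩ := exists_ae_norm_le_of_memLp_top hw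
  exact isBoundedUnder_of_eventually_le (a := R / c₀) <| hR.mono fun t ht ↦
    (dualNorm_le_div (hsmul t) hc₀ (hlow t)).trans (by gcongr)

lemma integral_apply_le_essSup_mul (hsmul : ∀ t (a : ℝ) v, N t (a • v) = |a| * N t v)
    (hc₀ : 0 < c₀) (hlow : ∀ t v, c₀ * ‖v‖ ≤ N t v) (hw : MemLp w ∞ μ) (hu : Integrable u μ)
    (hNu : Integrable (fun t ↦ N t (u t)) μ) :
    ∫ t, w t (u t) ∂μ ≤ essSup (fun t ↦ dualNorm (N t) (w t)) μ * ∫ t, N t (u t) ∂μ := by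
  rw [← integral_const_mul]
  refine integral_mono_ae (integrable_clm_apply_of_memLp_top hw hu) (hNu.const_mul _) ?_
  filter_upwards [ae_le_essSup (isBoundedUnder_dualNorm hsmul hc₀ hlow hw)] with t ht
  calc w t (u t) ≤ dualNorm (N t) (w t) * N t (u t) :=
        apply_le_dualNorm_mul (hsmul t) hc₀ (hlow t) _
    _ ≤ _ := by gcongr; exact (mul_nonneg hc₀.le (norm_nonneg _)).trans (hlow t _)

lemma exists_measurableSet_forall_le_one_lt_apply [SigmaFinite μ] [SecondCountableTopology E]
    (hNc : ∀ t, Continuous (N t)) (hNm : ∀ v, Measurable fun t ↦ N t v)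
    (hsmul : ∀ t (a : ℝ) v, N t (a • v) = |a| * N t v) (hw : AEStronglyMeasurable w μ)
    (hc : ∃ᶠ t in ae μ, c < dualNorm (N t) (w t)) :
    ∃ v A, MeasurableSet A ∧ 0 < μ A ∧ μ A < ∞ ∧ (∀ t ∈ A, N t v ≤ 1) ∧
      ∀ᵐ t ∂μ.restrict A, c < w t v := by
  have : Nonempty E := ⟨0⟩
  set d := TopologicalSpace.denseSeq E
  set B : ℕ → Set α := fun k ↦ {t | N t (d k) ≤ 1 ∧ c < hw.mk w t (d k)}
  have hB (k : ℕ) : MeasurableSet (B k) :=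
    (measurableSet_le (hNm _) measurable_const).inter <| measurableSet_lt measurable_const
      ((ContinuousLinearMap.apply ℝ ℝ (d k)).continuous.comp_stronglyMeasurable
        hw.stronglyMeasurable_mk).measurable
  have hcover : ∃ᶠ t in ae μ, ∃ k, t ∈ B k := hc.mp <| hw.ae_eq_mk.mono fun t hwt hct ↦ by
    obtain ⟨k, hk₁, hk₂⟩ := (TopologicalSpace.denseRange_denseSeq E).exists_lt_apply_of_lt_dualNorm
      (hNc t) (hsmul t) hct
    exact ⟨k, hk₁.le, hwt ▸ hk₂⟩
  obtain ⟨k, hk⟩ : ∃ k, μ (B k) ≠ 0 := by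
    rwa [frequently_ae_iff, ofPred_exists, Ne, measure_iUnion_null_iff, not_forall] at hcover
  obtain ⟨A, hA, hAB, hA0, hAtop⟩ :=
    Measure.exists_subset_measure_lt_top (hB k) (pos_iff_ne_zero.2 hk)
  refine ⟨d k, A, hA, hA0, hAtop, fun t ht ↦ (hAB ht).1, ?_⟩
  filter_upwards [ae_restrict_mem hA, ae_restrict_of_ae hw.ae_eq_mk] with t ht hwt
  exact hwt ▸ (hAB ht).2

lemma integral_indicator_smul_eq_setAverage {Φ : α → E → ℝ}
    (hΦ : ∀ t (a : ℝ), 0 ≤ a → ∀ x, Φ t (a • x) = a * Φ t x) {A : Set α} (hA : MeasurableSet A)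
    (v : E) : ∫ t, Φ t (A.indicator (fun _ ↦ (μ.real A)⁻¹ • v) t) ∂μ = ⨍ t in A, Φ t v ∂μ := by
  have hpt : (fun t ↦ Φ t (A.indicator (fun _ ↦ (μ.real A)⁻¹ • v) t)) =
      A.indicator fun t ↦ (μ.real A)⁻¹ * Φ t v := by
    ext t
    by_cases ht : t ∈ A
    · simp [ht, hΦ t _ (inv_nonneg.2 measureReal_nonneg)]
    · simpa [ht] using hΦ t 0 le_rfl 0
  rw [hpt, integral_indicator hA, integral_const_mul, setAverage_eq, smul_eq_mul]

lemma exists_integral_le_one_le_integral [SigmaFinite μ] [SecondCountableTopology E]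
    (hNc : ∀ t, Continuous (N t)) (hNm : ∀ v, Measurable fun t ↦ N t v)
    (hsmul : ∀ t (a : ℝ) v, N t (a • v) = |a| * N t v) (hN : ∀ t v, ‖N t v‖ ≤ C * ‖v‖)
    (hw : MemLp w ∞ μ) (hc : ∃ᶠ t in ae μ, c < dualNorm (N t) (w t)) :
    ∃ u : α → E, Integrable u μ ∧ ∫ t, N t (u t) ∂μ ≤ 1 ∧ c ≤ ∫ t, w t (u t) ∂μ := by
  obtain ⟨v, A, hA, hA0, hAtop, hNA, hwA⟩ :=
    exists_measurableSet_forall_le_one_lt_apply hNc hNm hsmul hw.1 hc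
  have hvA : IntegrableOn (fun _ ↦ v) A μ := integrableOn_const hAtop.ne
  refine ⟨A.indicator fun _ ↦ (μ.real A)⁻¹ • v, (integrable_indicator_iff hA).2 (hvA.smul _), ?_, ?_⟩
  · rw [integral_indicator_smul_eq_setAverage (fun t a ha x ↦ by rw [hsmul, abs_of_nonneg ha]) hA]
    exact (convex_Iic 1).set_average_mem isClosed_Iic hA0.ne' hAtop.ne
      ((ae_restrict_mem hA).mono hNA) (integrable_apply_of_norm_le hNc hNm hN hvA)
  · rw [integral_indicator_smul_eq_setAverage (fun t a _ x ↦ by rw [map_smul, smul_eq_mul]) hA]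
    exact (convex_Ici c).set_average_mem isClosed_Ici hA0.ne' hAtop.ne
      (hwA.mono fun t ht ↦ ht.le) (integrable_clm_apply_of_memLp_top (hw.restrict A) hvA)

theorem sSup_integral_apply_eq_essSup_dualNorm [SigmaFinite μ] [NeZero μ]
    [SecondCountableTopology E] (hNc : ∀ t, Continuous (N t))
    (hNm : ∀ v, Measurable fun t ↦ N t v) (hsmul : ∀ t (a : ℝ) v, N t (a • v) = |a| * N t v)
    (hc₀ : 0 < c₀) (hlow : ∀ t v, c₀ * ‖v‖ ≤ N t v) (hup : ∀ t v, N t v ≤ C * ‖v‖)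
    (hw : MemLp w ∞ μ) :
    sSup {r | ∃ u : α → E, Integrable u μ ∧ ∫ t, N t (u t) ∂μ ≤ 1 ∧ r = ∫ t, w t (u t) ∂μ} =
      essSup (fun t ↦ dualNorm (N t) (w t)) μ := by
  set S := {r | ∃ u : α → E, Integrable u μ ∧ ∫ t, N t (u t) ∂μ ≤ 1 ∧ r = ∫ t, w t (u t) ∂μ}
  set M := essSup (fun t ↦ dualNorm (N t) (w t)) μ
  have hN (t : α) (v : E) : ‖N t v‖ ≤ C * ‖v‖ := by
    rw [Real.norm_of_nonneg ((mul_nonneg hc₀.le (norm_nonneg v)).trans (hlow t v))]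
    exact hup t v
  have hnonneg (t : α) : 0 ≤ dualNorm (N t) (w t) := dualNorm_nonneg (hsmul t) hc₀ (hlow t)
  have hM : 0 ≤ M :=
    le_limsup_of_frequently_le (.of_forall hnonneg) (isBoundedUnder_dualNorm hsmul hc₀ hlow hw)
  have hupper : ∀ r ∈ S, r ≤ M := by
    rintro _ ⟨u, hu, hNu, rfl⟩
    exact (integral_apply_le_essSup_mul hsmul hc₀ hlow hw hu
      (integrable_apply_of_norm_le hNc hNm hN hu)).trans (mul_le_of_le_one_right hM hNu)
  have h0S : (0 : ℝ) ∈ S := ⟨0, integrable_zero .., by simp [apply_zero_of_abs_smul (hsmul _)],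
    by simp⟩
  refine le_antisymm (csSup_le ⟨0, h0S⟩ hupper) (le_of_forall_lt_imp_le_of_dense fun c hc ↦ ?_)
  obtain ⟨u, hu, hNu, hcu⟩ := exists_integral_le_one_le_integral hNc hNm hsmul hN hw
    (frequently_lt_of_lt_limsup (isCoboundedUnder_le_of_le (ae μ) hnonneg) hc)
  exact hcu.trans (le_csSup ⟨M, hupper⟩ ⟨u, hu, hNu, rfl⟩)

end Family

end DualNormDuality

theorem stmt_2_general {E : Type*} [NormedAddCommGroup E] [NormedSpace ℝ E] [FiniteDimensional ℝ E]
    (N : ℝ → E → ℝ)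
    (hNc : ContinuousOn (Function.uncurry N) (Set.Icc 0 1 ×ˢ Set.univ))
    (hN0 : ∀ t ∈ Set.Icc (0:ℝ) 1, ∀ v : E, 0 ≤ N t v)
    (hNeq : ∀ t ∈ Set.Icc (0:ℝ) 1, ∀ v : E, N t v = 0 ↔ v = 0)
    (hNsmul : ∀ t ∈ Set.Icc (0:ℝ) 1, ∀ (c : ℝ) (v : E), N t (c • v) = |c| * N t v)
    (w : ℝ → E →L[ℝ] ℝ)
    (hw : MemLp w ⊤ (volume.restrict (Set.Icc (0:ℝ) 1))) :
    sSup { r : ℝ | ∃ u : ℝ → E, IntegrableOn u (Set.Icc 0 1) volume ∧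
        (∫ t in Set.Icc (0:ℝ) 1, N t (u t)) ≤ 1 ∧
        r = ∫ t in Set.Icc (0:ℝ) 1, w t (u t) } =
      essSup (fun t => sSup { r : ℝ | ∃ v : E, N t v ≤ 1 ∧ r = w t v })
        (volume.restrict (Set.Icc (0:ℝ) 1)) := by
  obtain ⟨c₀, hc₀, hlow⟩ := isCompact_Icc.exists_pos_mul_norm_le hNc hNsmul
    fun t ht v hv ↦ (hN0 t ht v).lt_of_ne' ((hNeq t ht v).not.2 hv)
  obtain ⟨C, hup⟩ := isCompact_Icc.exists_le_mul_norm hNc hNsmul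
  -- `N` is only controlled on `[0,1]`; precomposing with the projection onto `[0,1]` gives a
  -- family on all of `ℝ` that agrees with `N` almost everywhere.
  set P : ℝ → Icc (0 : ℝ) 1 := projIcc 0 1 zero_le_one
  have hP : ∀ᵐ t ∂volume.restrict (Icc (0 : ℝ) 1), (P t : ℝ) = t :=
    ae_restrict_of_forall_mem measurableSet_Icc fun t ht ↦
      congrArg Subtype.val (projIcc_of_mem _ ht)
  have hcont : Continuous (Function.uncurry fun t ↦ N (P t)) :=
    hNc.comp_continuous (f := fun p : ℝ × E ↦ ((P p.1 : ℝ), p.2))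
      ((continuous_subtype_val.comp continuous_projIcc).prodMap continuous_id)
      fun p ↦ ⟨(P p.1).2, trivial⟩
  have : NeZero (volume.restrict (Icc (0 : ℝ) 1)) := ⟨by simp [Measure.restrict_eq_zero]⟩
  have key := sSup_integral_apply_eq_essSup_dualNorm (w := w) (fun t ↦ hcont.uncurry_left t)
    (fun v ↦ (hcont.uncurry_right v).measurable) (fun t ↦ hNsmul _ (P t).2) hc₀
    (fun t ↦ hlow _ (P t).2) (fun t ↦ hup _ (P t).2) hw
  have hint (u : ℝ → E) : ∫ t in Icc 0 1, N (P t) (u t) = ∫ t in Icc 0 1, N t (u t) :=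
    integral_congr_ae (hP.mono fun t ht ↦ by simp only [ht])
  simp only [hint] at key
  exact key.trans (essSup_congr_ae (hP.mono fun t ht ↦ by simp only [ht]; rfl))

/-- For a continuous family of norms `N_t` on a finite-dimensional Banach
space `𝔼`, the dual norm of `‖u‖_{N,1} = ∫₀¹ N_t(u(t)) dt` on `L^∞([0,1]; 𝔼*)` is
`‖w‖_{N*,∞} = ess sup_t N_t*(w(t))`, where `N_t*(w) = sup { w(v) : N_t(v) ≤ 1 }`. -/
theorem stmt_2 {E : Type*} [NormedAddCommGroup E] [NormedSpace ℝ E] [FiniteDimensional ℝ E]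
    (N : ℝ → E → ℝ)
    (hNc : ContinuousOn (Function.uncurry N) (Set.Icc 0 1 ×ˢ Set.univ))
    (hN0 : ∀ t ∈ Set.Icc (0:ℝ) 1, ∀ v : E, 0 ≤ N t v)
    (hNeq : ∀ t ∈ Set.Icc (0:ℝ) 1, ∀ v : E, N t v = 0 ↔ v = 0)
    (hNsmul : ∀ t ∈ Set.Icc (0:ℝ) 1, ∀ (c : ℝ) (v : E), N t (c • v) = |c| * N t v)
    (hNadd : ∀ t ∈ Set.Icc (0:ℝ) 1, ∀ v w : E, N t (v + w) ≤ N t v + N t w)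
    (w : ℝ → E →L[ℝ] ℝ)
    (hw : MemLp w ⊤ (volume.restrict (Set.Icc (0:ℝ) 1))) :
    sSup { r : ℝ | ∃ u : ℝ → E, IntegrableOn u (Set.Icc 0 1) volume ∧
        (∫ t in Set.Icc (0:ℝ) 1, N t (u t)) ≤ 1 ∧
        r = ∫ t in Set.Icc (0:ℝ) 1, w t (u t) } =
      essSup (fun t => sSup { r : ℝ | ∃ v : E, N t v ≤ 1 ∧ r = w t v })
        (volume.restrict (Set.Icc (0:ℝ) 1)) :=
  stmt_2_general N hNc hN0 hNeq hNsmul w hw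
end

section
/- Let Ω ⊆ ℝ^m be an open set containing 0, and let f_∞ : Ω → ℝ^m be continuous with f_∞(0) = 0. Suppose there is r > 0 with the closed ball B̄(0,r) ⊆ Ω, 0 ∉ f_∞(∂B(0,r)), and such that the map φ : 𝕊^{m−1} → 𝕊^{m−1}, φ(x) := f_∞(rx)/|f_∞(rx)|, has nonzero degree. Let f_n : Ω → ℝ^m be continuous functions converging uniformly on Ω to f_∞. Then there exist δ > 0 and N ∈ ℕ such that for all n ≥ N, B(0,δ) ⊆ f_n(Ω). -/
open Set Filter Topology Metric

lemma aux_norm_smul_mem_sphere {E : Type*} [NormedAddCommGroup E] [NormedSpace ℝ E]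
    {v : E} (hv : v ≠ 0) : ‖v‖⁻¹ • v ∈ Metric.sphere (0:E) 1 := by
  have h : ‖v‖ ≠ 0 := norm_ne_zero_iff.2 hv
  simp [mem_sphere_zero_iff_norm, norm_smul, abs_of_nonneg (norm_nonneg v),
    inv_mul_cancel₀ h]

lemma aux_homotopic_of_family {E : Type*} [NormedAddCommGroup E] [NormedSpace ℝ E]
    {X : Type*} [TopologicalSpace X]
    (F : C(unitInterval × X, E)) (hF : ∀ p, F p ≠ 0)
    (φ ψ : C(X, Metric.sphere (0:E) 1))
    (h0 : ∀ x, (φ x : E) = ‖F (0,x)‖⁻¹ • F (0,x))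
    (h1 : ∀ x, (ψ x : E) = ‖F (1,x)‖⁻¹ • F (1,x)) :
    φ.Homotopic ψ := by
  refine ⟨⟨⟨fun p => ⟨‖F p‖⁻¹ • F p, aux_norm_smul_mem_sphere (hF p)⟩, ?_⟩, ?_, ?_⟩⟩
  · refine Continuous.subtype_mk ?_ _
    exact ((continuous_norm.comp F.continuous).inv₀
      (fun p => norm_ne_zero_iff.2 (hF p))).smul F.continuous
  · intro x; exact Subtype.ext (h0 x).symm
  · intro x; exact Subtype.ext (h1 x).symm

/-- If `f∞ : Ω → ℝ^m` is continuous, `f∞(0) = 0`, `0 ∉ f∞(∂B(0,r))`, and the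
normalized boundary map `φ(x) = f∞(rx)/|f∞(rx)|` on the unit sphere has nonzero degree
(equivalently, is not nullhomotopic), then for any sequence `fₙ → f∞` uniformly on `Ω` there
are `δ > 0` and `N` with `B(0,δ) ⊆ fₙ(Ω)` for all `n ≥ N`. -/
theorem stmt_9 {m : ℕ} (Ω : Set (EuclideanSpace ℝ (Fin m))) (hΩ : IsOpen Ω)
    (h0 : (0 : EuclideanSpace ℝ (Fin m)) ∈ Ω)
    (finf : EuclideanSpace ℝ (Fin m) → EuclideanSpace ℝ (Fin m))
    (hfc : ContinuousOn finf Ω) (hf0 : finf 0 = 0)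
    (r : ℝ) (hr : 0 < r)
    (hball : Metric.closedBall (0 : EuclideanSpace ℝ (Fin m)) r ⊆ Ω)
    (hsphere : (0 : EuclideanSpace ℝ (Fin m)) ∉
      finf '' (Metric.sphere (0 : EuclideanSpace ℝ (Fin m)) r))
    (φ : C(Metric.sphere (0 : EuclideanSpace ℝ (Fin m)) 1,
          Metric.sphere (0 : EuclideanSpace ℝ (Fin m)) 1))
    (hφ : ∀ x : Metric.sphere (0 : EuclideanSpace ℝ (Fin m)) 1,
      (φ x : EuclideanSpace ℝ (Fin m)) =
        ‖finf (r • (x : EuclideanSpace ℝ (Fin m)))‖⁻¹ •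
          finf (r • (x : EuclideanSpace ℝ (Fin m))))
    (hdeg : ¬ φ.Nullhomotopic)
    (f : ℕ → EuclideanSpace ℝ (Fin m) → EuclideanSpace ℝ (Fin m))
    (hfn : ∀ n, ContinuousOn (f n) Ω)
    (hunif : TendstoUniformlyOn f finf atTop Ω) :
    ∃ δ > (0:ℝ), ∃ N : ℕ, ∀ n ≥ N,
      Metric.ball (0 : EuclideanSpace ℝ (Fin m)) δ ⊆ f n '' Ω := by
  rcases subsingleton_or_nontrivial (EuclideanSpace ℝ (Fin m)) with hsub | hnt
  -- trivial case (m = 0)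
  · exact ⟨1, one_pos, 0, fun n _ y _ => ⟨0, h0, Subsingleton.elim _ _⟩⟩
  -- sphere of radius r is nonempty and compact
  have hrs : (Metric.sphere (0:EuclideanSpace ℝ (Fin m)) r).Nonempty :=
    NormedSpace.sphere_nonempty.2 hr.le
  have hsΩ : Metric.sphere (0:EuclideanSpace ℝ (Fin m)) r ⊆ Ω :=
    fun z hz => hball (sphere_subset_closedBall hz)
  have hcont : ContinuousOn (fun z => ‖finf z‖)
      (Metric.sphere (0:EuclideanSpace ℝ (Fin m)) r) :=
    continuous_norm.comp_continuousOn (hfc.mono hsΩ)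
  obtain ⟨z₀, hz₀, hz₀min⟩ := (isCompact_sphere (0:EuclideanSpace ℝ (Fin m)) r).exists_isMinOn
    hrs hcont
  have hεpos : 0 < ‖finf z₀‖ := by
    rw [norm_pos_iff]
    intro h
    exact hsphere ⟨z₀, hz₀, h⟩
  set ε := ‖finf z₀‖ with hε
  have hlow : ∀ z ∈ Metric.sphere (0:EuclideanSpace ℝ (Fin m)) r, ε ≤ ‖finf z‖ := hz₀min
  -- uniform closeness
  obtain ⟨N, hN⟩ := ((Metric.tendstoUniformlyOn_iff.1 hunif) (ε/3)
    (by linarith)).exists_forall_of_atTop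
  refine ⟨ε/3, by linarith, N, fun n hn y hy => ?_⟩
  by_contra hy'
  -- the translated map g := f n - y does not vanish on Ω
  have hg : ∀ z ∈ Ω, f n z - y ≠ 0 := by
    intro z hz h
    exact hy' ⟨z, hz, by rwa [sub_eq_zero] at h⟩
  have hgc : ContinuousOn (fun z => f n z - y) Ω := (hfn n).sub continuousOn_const
  have hyn : ‖y‖ < ε/3 := by simpa [Metric.mem_ball, dist_zero_right] using hy
  have hclose : ∀ x ∈ Ω, dist (finf x) (f n x) < ε/3 := hN n hn
  -- key membership facts
  have hmem : ∀ (t : ℝ), 0 ≤ t → t ≤ 1 →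
      ∀ x : Metric.sphere (0:EuclideanSpace ℝ (Fin m)) 1,
      (t * r) • (x : EuclideanSpace ℝ (Fin m)) ∈
        Metric.closedBall (0:EuclideanSpace ℝ (Fin m)) r := by
    intro t ht ht1 x
    have hx : ‖(x : EuclideanSpace ℝ (Fin m))‖ = 1 := mem_sphere_zero_iff_norm.1 x.2
    rw [Metric.mem_closedBall, dist_zero_right, norm_smul, hx, mul_one,
      Real.norm_eq_abs, abs_of_nonneg (mul_nonneg ht hr.le)]
    nlinarith
  have hsphmem : ∀ x : Metric.sphere (0:EuclideanSpace ℝ (Fin m)) 1,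
      r • (x : EuclideanSpace ℝ (Fin m)) ∈ Metric.sphere (0:EuclideanSpace ℝ (Fin m)) r := by
    intro x
    have hx : ‖(x : EuclideanSpace ℝ (Fin m))‖ = 1 := mem_sphere_zero_iff_norm.1 x.2
    rw [mem_sphere_zero_iff_norm, norm_smul, hx, mul_one, Real.norm_eq_abs, abs_of_nonneg hr.le]
  -- the boundary distance estimate
  have hest : ∀ x : Metric.sphere (0:EuclideanSpace ℝ (Fin m)) 1,
      ‖(f n (r • (x:EuclideanSpace ℝ (Fin m))) - y) -
        finf (r • (x:EuclideanSpace ℝ (Fin m)))‖ < 2*ε/3 := by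
    intro x
    have h1 := hclose _ (hsΩ (hsphmem x))
    rw [dist_eq_norm] at h1
    calc ‖(f n (r • (x:EuclideanSpace ℝ (Fin m))) - y) -
        finf (r • (x:EuclideanSpace ℝ (Fin m)))‖
        = ‖(f n (r • (x:EuclideanSpace ℝ (Fin m))) - finf (r • (x:EuclideanSpace ℝ (Fin m)))) +
            (-y)‖ := by congr 1; abel
      _ ≤ ‖f n (r • (x:EuclideanSpace ℝ (Fin m))) - finf (r • (x:EuclideanSpace ℝ (Fin m)))‖
            + ‖y‖ := by
              simpa [norm_neg] using norm_add_le
                (f n (r • (x:EuclideanSpace ℝ (Fin m))) - finf (r • (x:EuclideanSpace ℝ (Fin m)))) (-y)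
      _ < ε/3 + ε/3 := by rw [← norm_sub_rev]; exact add_lt_add h1 hyn
      _ = 2*ε/3 := by ring
  -- define ψ
  have hgs : ∀ x : Metric.sphere (0:EuclideanSpace ℝ (Fin m)) 1,
      f n (r • (x:EuclideanSpace ℝ (Fin m))) - y ≠ 0 :=
    fun x => hg _ (hsΩ (hsphmem x))
  -- continuity building blocks
  have ct : Continuous fun p : unitInterval × Metric.sphere (0:EuclideanSpace ℝ (Fin m)) 1 =>
      ((p.1 : ℝ)) := continuous_subtype_val.comp continuous_fst
  have cx : Continuous fun p : unitInterval × Metric.sphere (0:EuclideanSpace ℝ (Fin m)) 1 =>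
      ((p.2 : EuclideanSpace ℝ (Fin m))) := continuous_subtype_val.comp continuous_snd
  have c1 : Continuous fun p : unitInterval × Metric.sphere (0:EuclideanSpace ℝ (Fin m)) 1 =>
      finf (r • (p.2 : EuclideanSpace ℝ (Fin m))) := by
    exact hfc.comp_continuous (cx.const_smul r) (fun p => hsΩ (hsphmem p.2))
  have c2 : Continuous fun p : unitInterval × Metric.sphere (0:EuclideanSpace ℝ (Fin m)) 1 =>
      f n (r • (p.2 : EuclideanSpace ℝ (Fin m))) - y := by
    exact hgc.comp_continuous (cx.const_smul r) (fun p => hsΩ (hsphmem p.2))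
  -- the straight-line family between f∞ and (f n - y) on the boundary sphere
  set F₂ : C(unitInterval × Metric.sphere (0:EuclideanSpace ℝ (Fin m)) 1,
      EuclideanSpace ℝ (Fin m)) :=
    ⟨fun p => (1 - (p.1:ℝ)) • finf (r • (p.2 : EuclideanSpace ℝ (Fin m))) +
        (p.1:ℝ) • (f n (r • (p.2 : EuclideanSpace ℝ (Fin m))) - y),
      ((continuous_const.sub ct).smul c1).add (ct.smul c2)⟩ with hF₂def
  have hF₂ : ∀ p, F₂ p ≠ 0 := by
    rintro ⟨t, x⟩ h
    simp only [hF₂def, ContinuousMap.coe_mk] at h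
    set a := finf (r • (x : EuclideanSpace ℝ (Fin m))) with ha
    set b := f n (r • (x : EuclideanSpace ℝ (Fin m))) - y with hb
    have key : a = (t:ℝ) • (a - b) := by
      have heq : a - ((t:ℝ) • a - (t:ℝ) • b) = (1-(t:ℝ)) • a + (t:ℝ) • b := by
        rw [sub_smul, one_smul]; abel
      rw [smul_sub, ← sub_eq_zero, heq]
      exact h
    have h1 : ‖a‖ = |(t:ℝ)| * ‖a - b‖ := by
      nth_rewrite 1 [key]
      rw [norm_smul, Real.norm_eq_abs]
    have h2 : |(t:ℝ)| ≤ 1 := abs_le.2 ⟨by linarith [t.2.1], t.2.2⟩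
    have h3 : ‖a - b‖ < 2*ε/3 := by rw [norm_sub_rev]; exact hest x
    have h4 : ε ≤ ‖a‖ := hlow _ (hsphmem x)
    have h5 : ‖a - b‖ ≥ 0 := norm_nonneg _
    nlinarith [abs_nonneg (t:ℝ)]
  -- ψ : the normalized boundary map of f n - y
  set ψ : C(Metric.sphere (0:EuclideanSpace ℝ (Fin m)) 1,
      Metric.sphere (0:EuclideanSpace ℝ (Fin m)) 1) :=
    ⟨fun x => ⟨‖f n (r • (x : EuclideanSpace ℝ (Fin m))) - y‖⁻¹ •
        (f n (r • (x : EuclideanSpace ℝ (Fin m))) - y), aux_norm_smul_mem_sphere (hgs x)⟩,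
      by
        refine Continuous.subtype_mk ?_ _
        have cg : Continuous fun x : Metric.sphere (0:EuclideanSpace ℝ (Fin m)) 1 =>
            f n (r • (x : EuclideanSpace ℝ (Fin m))) - y :=
          hgc.comp_continuous (continuous_subtype_val.const_smul r)
            (fun x => hsΩ (hsphmem x))
        exact ((continuous_norm.comp cg).inv₀
          (fun x => norm_ne_zero_iff.2 (hgs x))).smul cg⟩ with hψdef
  have hom1 : φ.Homotopic ψ := by
    refine aux_homotopic_of_family F₂ hF₂ φ ψ (fun x => ?_) (fun x => ?_)
    · have : F₂ (0, x) = finf (r • (x : EuclideanSpace ℝ (Fin m))) := by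
        simp [hF₂def]
      rw [this]; exact hφ x
    · have : F₂ (1, x) = f n (r • (x : EuclideanSpace ℝ (Fin m))) - y := by
        simp [hF₂def]
      rw [this]
      rfl
  -- the retraction family: shrink the sphere to the center
  have hmem' : ∀ (p : unitInterval × Metric.sphere (0:EuclideanSpace ℝ (Fin m)) 1),
      ((1 - (p.1:ℝ)) * r) • (p.2 : EuclideanSpace ℝ (Fin m)) ∈
        Metric.closedBall (0:EuclideanSpace ℝ (Fin m)) r :=
    fun p => hmem _ (by linarith [p.1.2.2]) (by linarith [p.1.2.1]) p.2
  set F₁ : C(unitInterval × Metric.sphere (0:EuclideanSpace ℝ (Fin m)) 1,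
      EuclideanSpace ℝ (Fin m)) :=
    ⟨fun p => f n (((1 - (p.1:ℝ)) * r) • (p.2 : EuclideanSpace ℝ (Fin m))) - y,
      by
        refine hgc.comp_continuous ?_ (fun p => hball (hmem' p))
        exact ((continuous_const.sub ct).mul continuous_const).smul cx⟩ with hF₁def
  have hF₁ : ∀ p, F₁ p ≠ 0 := fun p => hg _ (hball (hmem' p))
  have hc0 : f n 0 - y ≠ 0 := hg 0 h0
  have hom2 : ψ.Homotopic (ContinuousMap.const _
      ⟨‖f n 0 - y‖⁻¹ • (f n 0 - y), aux_norm_smul_mem_sphere hc0⟩) := by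
    refine aux_homotopic_of_family F₁ hF₁ ψ _ (fun x => ?_) (fun x => ?_)
    · have : F₁ (0, x) = f n (r • (x : EuclideanSpace ℝ (Fin m))) - y := by
        simp [hF₁def]
      rw [this]
      rfl
    · have : F₁ (1, x) = f n 0 - y := by
        simp [hF₁def]
      rw [this]
      rfl
  exact hdeg ⟨_, hom1.trans hom2⟩
end

section
/- Let Ω ⊆ 𝔹 be an open ball B(x₀, r) in a Banach space 𝔹 and let f : B(x₀,r) → 𝔹 be a C² map such that the differential Df_{x₀} is an isomorphism with ‖(Df_{x₀})^{-1}‖ ≤ ℓ and ‖(D²f)_x‖ ≤ L for every x ∈ B(x₀,r), where ℓ, L > 0. Then, setting C₁ := 1/(2ℓ) and C₂ := 1/(2ℓL), for every ρ ∈ (0, min{r, C₂}) one has B(f(x₀), C₁ρ) ⊆ f(B(x₀, ρ)). -/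
open Set Metric

/-- Quantitative open mapping theorem: if `f` is `C²` on `B(x₀,r)` in a
Banach space, `Df_{x₀}` is an isomorphism with `‖(Df_{x₀})⁻¹‖ ≤ ℓ`, and `‖D²f‖ ≤ L` on the
ball, then with `C₁ = 1/(2ℓ)` and `C₂ = 1/(2ℓL)`, for every `ρ ∈ (0, min r C₂)` one has
`B(f(x₀), C₁ ρ) ⊆ f(B(x₀, ρ))`. -/
theorem stmt_16 {B : Type*} [NormedAddCommGroup B] [NormedSpace ℝ B] [CompleteSpace B]
    (f : B → B) (x₀ : B) (r ℓ L : ℝ) (hr : 0 < r) (hℓ : 0 < ℓ) (hL : 0 < L)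
    (hf : ContDiffOn ℝ 2 f (Metric.ball x₀ r))
    (A : B ≃L[ℝ] B)
    (hA : (A : B →L[ℝ] B) = fderiv ℝ f x₀)
    (hAinv : ‖(A.symm : B →L[ℝ] B)‖ ≤ ℓ)
    (hD2 : ∀ x ∈ Metric.ball x₀ r, ‖iteratedFDerivWithin ℝ 2 f (Metric.ball x₀ r) x‖ ≤ L) :
    ∀ ρ : ℝ, 0 < ρ → ρ < min r (1 / (2 * ℓ * L)) →
      Metric.ball (f x₀) ((1 / (2 * ℓ)) * ρ) ⊆ f '' Metric.ball x₀ ρ := by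
  rcases subsingleton_or_nontrivial B with hSub | hNon
  · intro ρ hρ0 _ y _
    exact ⟨x₀, mem_ball_self hρ0, Subsingleton.elim _ _⟩
  intro ρ hρ0 hρ y hy
  set s : Set B := Metric.ball x₀ r with hs_def
  have os : IsOpen s := isOpen_ball
  have hx₀s : x₀ ∈ s := mem_ball_self hr
  have hu : UniqueDiffOn ℝ s := os.uniqueDiffOn
  have hconv : Convex ℝ s := convex_ball _ _
  have hρr : ρ < r := lt_of_lt_of_le hρ (min_le_left _ _)
  have hρC : ρ < 1 / (2 * ℓ * L) := lt_of_lt_of_le hρ (min_le_right _ _)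
  -- the derivative within s
  set g : B → (B →L[ℝ] B) := fun x => fderivWithin ℝ f s x with hg_def
  have hg : ContDiffOn ℝ 1 g s := hf.fderivWithin hu (by norm_num)
  have hgd : DifferentiableOn ℝ g s := hg.differentiableOn one_ne_zero
  -- second derivative bound: ‖fderivWithin g s x‖ ≤ L on s
  have hgL : ∀ x ∈ s, ‖fderivWithin ℝ g s x‖ ≤ L := by
    intro x hx
    have h1 : ‖iteratedFDerivWithin ℝ 1 g s x‖ = ‖iteratedFDerivWithin ℝ 2 f s x‖ :=
      norm_iteratedFDerivWithin_fderivWithin (n := 1) hu hx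
    have h2 : iteratedFDerivWithin ℝ 1 g s x =
        (continuousMultilinearCurryFin1 ℝ B (B →L[ℝ] B)).symm (fderivWithin ℝ g s x) := by
      ext m
      rw [iteratedFDerivWithin_one_apply (hu x hx)]
      rfl
    have h3 : ‖fderivWithin ℝ g s x‖ = ‖iteratedFDerivWithin ℝ 2 f s x‖ := by
      rw [← h1, h2, LinearIsometryEquiv.norm_map]
    rw [h3]
    exact hD2 x hx
  -- g x₀ = A
  have hgx₀ : g x₀ = (A : B →L[ℝ] B) := by
    show fderivWithin ℝ f s x₀ = (A : B →L[ℝ] B)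
    rw [fderivWithin_of_isOpen os hx₀s, hA]
  -- Lipschitz-type bound on g: ‖g x - A‖ ≤ L * ‖x - x₀‖
  have hgLip : ∀ x ∈ s, ‖g x - (A : B →L[ℝ] B)‖ ≤ L * ‖x - x₀‖ := by
    intro x hx
    have := hconv.norm_image_sub_le_of_norm_hasFDerivWithin_le
      (f := g) (f' := fun x => fderivWithin ℝ g s x) (C := L)
      (fun z hz => (hgd z hz).hasFDerivWithinAt) hgL hx₀s hx
    rw [hgx₀] at this
    exact this
  -- choose ε
  set ε : ℝ := max (2 * ℓ * dist y (f x₀)) (ρ / 2) with hε_def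
  have hεpos : 0 < ε := lt_max_of_lt_right (by linarith)
  have hdy : dist y (f x₀) < 1 / (2 * ℓ) * ρ := mem_ball.1 hy
  have hερ : ε < ρ := by
    apply max_lt
    · have h2ℓ : 0 < 2 * ℓ := by linarith
      calc 2 * ℓ * dist y (f x₀) < 2 * ℓ * (1 / (2 * ℓ) * ρ) := by
            exact mul_lt_mul_of_pos_left hdy h2ℓ
        _ = ρ := by field_simp
    · linarith
  have hdist_ε : 2 * ℓ * dist y (f x₀) ≤ ε := le_max_left _ _
  have hball : closedBall x₀ ε ⊆ s := by
    apply Subset.trans (closedBall_subset_ball hερ) (ball_subset_ball hρr.le)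
  -- the approximation constant
  have hLρ0 : 0 ≤ L * ρ := by positivity
  set c : NNReal := ⟨L * ρ, hLρ0⟩ with hc_def
  have happrox : ApproximatesLinearOn f (A : B →L[ℝ] B) (closedBall x₀ ε) c := by
    intro p hp q hq
    have key := (convex_closedBall x₀ ε).norm_image_sub_le_of_norm_hasFDerivWithin_le'
      (f := f) (f' := g) (φ := (A : B →L[ℝ] B)) (C := L * ρ)
      (fun z hz => ((hf.differentiableOn (by norm_num) z (hball hz)).hasFDerivWithinAt).mono hball)
      (fun z hz => by
        calc ‖g z - (A : B →L[ℝ] B)‖ ≤ L * ‖z - x₀‖ := hgLip z (hball hz)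
          _ ≤ L * ρ := by
              apply mul_le_mul_of_nonneg_left _ hL.le
              have := mem_closedBall_iff_norm.1 hz
              linarith
        )
      hq hp
    simpa [show (c : ℝ) = L * ρ from rfl] using key
  -- surjectivity via the nonlinear right inverse
  have hsurj := happrox.surjOn_closedBall_of_nonlinearRightInverse
    A.toNonlinearRightInverse hεpos.le (Subset.rfl : closedBall x₀ ε ⊆ closedBall x₀ ε)
  have hN : (A.toNonlinearRightInverse.nnnorm : ℝ) = ‖(A.symm : B →L[ℝ] B)‖ := rfl
  have hNpos : (0:ℝ) < ‖(A.symm : B →L[ℝ] B)‖ := A.norm_symm_pos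
  have hNinv : (1:ℝ) / ℓ ≤ ((A.toNonlinearRightInverse.nnnorm : ℝ))⁻¹ := by
    rw [hN]
    rw [one_div]
    exact inv_anti₀ hNpos hAinv
  -- y belongs to the target closed ball
  have hymem : y ∈ closedBall (f x₀) ((((A.toNonlinearRightInverse.nnnorm : ℝ))⁻¹ - c) * ε) := by
    rw [mem_closedBall]
    have hcρ : (c : ℝ) < 1 / (2 * ℓ) := by
      have h2ℓL : (0:ℝ) < 2 * ℓ * L := by positivity
      have : L * ρ < L * (1 / (2 * ℓ * L)) := mul_lt_mul_of_pos_left hρC hL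
      calc (c : ℝ) = L * ρ := rfl
        _ < L * (1 / (2 * ℓ * L)) := this
        _ = 1 / (2 * ℓ) := by field_simp
    have hlow : 1 / (2 * ℓ) ≤ ((A.toNonlinearRightInverse.nnnorm : ℝ))⁻¹ - c := by
      have : (1:ℝ) / (2 * ℓ) + c < 1 / (2 * ℓ) + 1 / (2 * ℓ) := by linarith
      have h1 : (1:ℝ) / (2 * ℓ) + 1 / (2 * ℓ) = 1 / ℓ := by
        rw [← add_div, mul_comm, ← div_div]
        field_simp
        ring
      linarith [hNinv]
    calc dist y (f x₀) ≤ ε / (2 * ℓ) := by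
          rw [div_eq_inv_mul, ← mul_le_mul_iff_of_pos_left (show (0:ℝ) < 2 * ℓ by linarith)]
          calc 2 * ℓ * dist y (f x₀) ≤ ε := hdist_ε
            _ = 2 * ℓ * ((2 * ℓ)⁻¹ * ε) := by field_simp
      _ = 1 / (2 * ℓ) * ε := by rw [div_eq_mul_inv, one_div]; ring
      _ ≤ (((A.toNonlinearRightInverse.nnnorm : ℝ))⁻¹ - c) * ε :=
          mul_le_mul_of_nonneg_right hlow hεpos.le
  obtain ⟨x, hx, hfx⟩ := hsurj hymem
  exact ⟨x, (closedBall_subset_ball hερ) hx, hfx⟩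
end
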